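/- Let $p$ be a prime and $P_1, \ldots, P_n, q_1, \ldots, q_r$ be primes distinct from $p$ with $1 + P_1 \cdots P_n = q_1^{k_1} \cdots q_r^{k_r}$, and suppose $p \in \{P_1, \ldots, P_n\}$. Let $g$ be a primitive root mod $p^2$ and $\ell$ the base-$g$ discrete logarithm on $(\mathbb{Z}/p^2\mathbb{Z})^\times$. Then $k_1 \ell(q_1) + \cdots + k_r \ell(q_r) \equiv 0 \pmod{p-1}$ but $k_1 \ell(q_1) + \cdots + k_r \ell(q_r) \not\equiv 0 \pmod{p}$. -/
import Mathlib


theorem stmt_17 (p : ℕ) (hp : p.Prime)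
    (n r : ℕ) (P : Fin n → ℕ) (q : Fin r → ℕ) (k : Fin r → ℕ)
    (hP : ∀ i, (P i).Prime) (hPinj : Function.Injective P)
    (hq : ∀ i, (q i).Prime) (hqp : ∀ i, q i ≠ p)
    (heq : 1 + ∏ i, P i = ∏ i, q i ^ k i)
    (hpP : ∃ j, P j = p)
    (g : ℕ) (hg : orderOf (g : ZMod (p ^ 2)) = p * (p - 1))
    (ℓ : Fin r → ℕ) (hℓ : ∀ i, (g : ZMod (p ^ 2)) ^ ℓ i = (q i : ZMod (p ^ 2))) :
    (p - 1) ∣ ∑ i, k i * ℓ i ∧ ¬ p ∣ ∑ i, k i * ℓ i := by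
  obtain ⟨j, hj⟩ := hpP
  set S := ∑ i, k i * ℓ i with hS
  set M := ∏ i ∈ Finset.univ.erase j, P i with hM
  have hNM : ∏ i, P i = p * M := by
    rw [hM, ← hj, Finset.mul_prod_erase Finset.univ P (Finset.mem_univ j)]
  have hpM : ¬ p ∣ M := by
    intro hdvd
    obtain ⟨i, hi, hpi⟩ := hp.prime.exists_mem_finset_dvd hdvd
    have hij : P i = P j := by
      rw [hj]; exact ((Nat.prime_dvd_prime_iff_eq hp (hP i)).mp hpi).symm
    have : i = j := hPinj hij
    exact (Finset.mem_erase.mp hi).1 this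
  -- g^S = cast of RHS
  have hgS : (g : ZMod (p ^ 2)) ^ S = ((1 + ∏ i, P i : ℕ) : ZMod (p ^ 2)) := by
    rw [heq, hS, ← Finset.prod_pow_eq_pow_sum]
    push_cast
    exact Finset.prod_congr rfl fun i _ => by rw [mul_comm, pow_mul, hℓ i]
  -- order of g mod p
  set d := orderOf ((g : ℕ) : ZMod p) with hd
  have hdp1 : (p - 1) ∣ d := by
    have h1 : ((g : ℕ) : ZMod p) ^ d = 1 := pow_orderOf_eq_one _
    have h2 : (p : ℤ) ∣ (g : ℤ) ^ d - 1 := by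
      have : (((g : ℤ) ^ d - 1 : ℤ) : ZMod p) = 0 := by push_cast [h1]; ring
      exact (ZMod.intCast_zmod_eq_zero_iff_dvd _ p).mp this
    have h3 : (p : ℤ) ∣ ∑ i ∈ Finset.range p, ((g : ℤ) ^ d) ^ i * 1 ^ (p - 1 - i) := by
      exact dvd_geom_sum₂_self (by simpa using h2)
    have h4 : ((p : ℤ)) ^ 2 ∣ ((g : ℤ) ^ d) ^ p - 1 := by
      have := mul_dvd_mul h3 h2
      rw [geom_sum₂_mul] at this
      simpa [sq] using this
    have h5 : ((g : ℕ) : ZMod (p ^ 2)) ^ (d * p) = 1 := by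
      have : ((((g : ℤ) ^ d) ^ p - 1 : ℤ) : ZMod (p ^ 2)) = 0 := by
        rw [ZMod.intCast_zmod_eq_zero_iff_dvd]
        exact_mod_cast h4
      have : ((((g : ℤ) ^ d) ^ p : ℤ) : ZMod (p ^ 2)) = 1 := by
        rw [Int.cast_sub, Int.cast_one, sub_eq_zero] at this; exact_mod_cast this
      rw [pow_mul]
      exact_mod_cast this
    have h6 : p * (p - 1) ∣ d * p := hg ▸ orderOf_dvd_of_pow_eq_one h5
    have h7 : (p - 1) * p ∣ d * p := by rwa [mul_comm] at h6
    exact (Nat.mul_dvd_mul_iff_right hp.pos).mp h7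
  -- d divides S
  have hcast : (ZMod.castHom (dvd_pow_self p (two_ne_zero)) (ZMod p))
      ((g : ZMod (p ^ 2))) = ((g : ℕ) : ZMod p) := map_natCast _ g
  have hdS : d ∣ S := by
    apply orderOf_dvd_of_pow_eq_one
    have := congrArg (ZMod.castHom (dvd_pow_self p (two_ne_zero)) (ZMod p)) hgS
    rw [map_pow, hcast, map_natCast] at this
    rw [this]
    push_cast [hNM]
    simp [ZMod.natCast_self]
  refine ⟨hdp1.trans hdS, ?_⟩
  intro hpS
  have hcop : Nat.Coprime p (p - 1) := by
    have h2 := hp.two_le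
    exact hp.coprime_iff_not_dvd.mpr (Nat.not_dvd_of_pos_of_lt (by omega) (by omega))
  have hfull : p * (p - 1) ∣ S := Nat.Coprime.mul_dvd_of_dvd_of_dvd hcop hpS (hdp1.trans hdS)
  have h1 : (g : ZMod (p ^ 2)) ^ S = 1 := orderOf_dvd_iff_pow_eq_one.mp (hg ▸ hfull)
  rw [hgS] at h1
  have h2 : ((∏ i, P i : ℕ) : ZMod (p ^ 2)) = 0 := by
    have : ((1 + ∏ i, P i : ℕ) : ZMod (p ^ 2)) = 1 := h1
    push_cast at this ⊢
    linear_combination this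
  rw [hNM] at h2
  have h3 : p ^ 2 ∣ p * M := (ZMod.natCast_eq_zero_iff _ _).mp (by exact_mod_cast h2)
  have h4 : p ∣ M := by
    rcases h3 with ⟨c, hc⟩
    rw [sq, mul_assoc] at hc
    exact ⟨c, Nat.eq_of_mul_eq_mul_left hp.pos hc⟩
  exact hpM h4
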